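/- arXiv:2204.12806 — 3 statements merged into one kernel-verified Lean document; each statement's English description precedes it below -/
import Mathlib

section
/- Let f : (Option M)^n → Option M be a monotone sig-interpreter: for all inputs m₁,…,mₙ and index i, if f(m₁,…,m_{i−1}, none, m_{i+1},…,mₙ) = some x, then f(m₁,…,m_{i−1}, mᵢ, m_{i+1},…,mₙ) = some x for any mᵢ. If f(m) = some a, f(m') = some b, and a ≠ b for two input vectors m, m', then there exists an index i such that m_i ≠ m'_i and both m_i and m'_i are not none. -/
/-- A sig-interpreter `f` is monotone if replacing a missing (`none`) entry by
any value does not change the output from one valid (`some`) value to another. -/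
def MonotoneInterp {M : Type*} {n : ℕ} (f : (Fin n → Option M) → Option M) : Prop :=
  ∀ (m : Fin n → Option M) (i : Fin n) (x : M),
    f (Function.update m i none) = some x → f m = some x

/-- Filling lemma: if `m` agrees with `u` except at coordinates where `m` is
`none`, then a valid output on `m` persists on `u`. -/
lemma monotone_interp_fill
    {M : Type*} {n : ℕ} (f : (Fin n → Option M) → Option M)
    (hf : MonotoneInterp f) (u : Fin n → Option M) (a : M) :
    ∀ s : Finset (Fin n), ∀ m : Fin n → Option M,
      (∀ i, m i ≠ u i → i ∈ s) → (∀ i, m i ≠ u i → m i = none) →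
      f m = some a → f u = some a := by
  classical
  intro s
  induction s using Finset.induction_on with
  | empty =>
    intro m hs _ hm
    have : m = u := by
      funext i
      by_contra h
      exact absurd (hs i h) (Finset.notMem_empty i)
    rwa [← this]
  | @insert j t hjt ih =>
    intro m hs hnone hm
    by_cases hj : m j = u j
    · exact ih m (fun i hi => by
        rcases Finset.mem_insert.mp (hs i hi) with h | h
        · exact absurd (h ▸ hj) hi
        · exact h) hnone hm
    · set m₂ := Function.update m j (u j) with hm₂
      have hupd : Function.update m₂ j none = m := by
        funext i
        by_cases h : i = j
        · subst h; simp only [Function.update_self]; exact (hnone _ hj).symm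
        · simp [hm₂, Function.update_of_ne h]
      have hfm₂ : f m₂ = some a := by
        apply hf m₂ j a
        rw [hupd]; exact hm
      refine ih m₂ (fun i hi => ?_) (fun i hi => ?_) hfm₂
      · by_cases h : i = j
        · subst h; simp [hm₂, Function.update_self] at hi
        · have : m i ≠ u i := by simpa [hm₂, Function.update_of_ne h] using hi
          rcases Finset.mem_insert.mp (hs i this) with h' | h'
          · exact absurd h' h
          · exact h'
      · by_cases h : i = j
        · subst h; simp [hm₂, Function.update_self] at hi
        · rw [hm₂, Function.update_of_ne h]
          exact hnone i (by simpa [hm₂, Function.update_of_ne h] using hi)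

/-- If a monotone sig-interpreter yields two distinct valid outputs on two input
vectors, then the vectors differ at some coordinate where both entries are
present (not `none`). -/
theorem monotone_interp_distinct_outputs
    {M : Type*} {n : ℕ} (f : (Fin n → Option M) → Option M)
    (hf : MonotoneInterp f)
    (m m' : Fin n → Option M) (a b : M)
    (ha : f m = some a) (hb : f m' = some b) (hab : a ≠ b) :
    ∃ i : Fin n, m i ≠ m' i ∧ m i ≠ none ∧ m' i ≠ none := by
  classical
  by_contra hcon
  push_neg at hcon
  -- join vector
  set u : Fin n → Option M := fun i => if m i = none then m' i else m i with hu
  have h1 : f u = some a := by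
    refine monotone_interp_fill f hf u a Finset.univ m (fun _ _ => Finset.mem_univ _)
      (fun i hi => ?_) ha
    by_contra h
    exact hi (by simp [hu, h])
  have h2 : f u = some b := by
    refine monotone_interp_fill f hf u b Finset.univ m' (fun _ _ => Finset.mem_univ _)
      (fun i hi => ?_) hb
    by_contra h
    by_cases heq : m i = m' i
    · exact hi (by simp [hu, heq])
    · by_cases hmn : m i = none
      · exact hi (by simp [hu, hmn])
      · exact h (hcon i heq hmn)
  exact hab (by rw [h1] at h2; exact Option.some_injective _ h2)
end

section
/- Let F be an intersecting family over [n]. Define the multisig interpreter g_F : (Option M)^n → Option M by: g_F(m₁,…,mₙ) = some x if there exists S ∈ F (chosen as the first such S in a fixed enumeration of F) with m_i = some x for all i ∈ S, and g_F(m) = none otherwise (also requiring all m_i for i ∈ S to agree). Then g_F is a monotone sig-interpreter: for all m and i, if g_F(m₁,…,m_{i−1}, none, m_{i+1},…,mₙ) = some x then g_F(m₁,…,m_{i−1}, mᵢ, m_{i+1},…,mₙ) = some x for any mᵢ. -/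
/-- Check a candidate authorized set `S`: succeed with `some x` iff `S` is
nonempty and all entries of `m` indexed by `S` are equal to `some x`. -/
noncomputable def checkSet {M : Type*} [DecidableEq M] {n : ℕ}
    (S : Finset (Fin n)) (m : Fin n → Option M) : Option M :=
  match S.toList with
  | [] => none
  | i :: _ =>
    match m i with
    | none => none
    | some x => if ∀ j ∈ S, m j = some x then some x else none

/-- The multisig interpreter associated with a fixed enumeration `L` of the
family: it outputs the value produced by the first set in `L` whose entries all
agree and are present, and `none` if no such set exists. -/
noncomputable def multisigInterp {M : Type*} [DecidableEq M] {n : ℕ}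
    (L : List (Finset (Fin n))) (m : Fin n → Option M) : Option M :=
  L.findSome? (fun S => checkSet S m)

/-- A family (given as a list of subsets of `[n]`) is intersecting if any two
members have nonempty intersection. -/
def IntersectingList {n : ℕ} (L : List (Finset (Fin n))) : Prop :=
  ∀ S ∈ L, ∀ S' ∈ L, (S ∩ S').Nonempty

/-! A set that succeeds while entry `i` is missing does not contain `i`, so it still succeeds once
the entry is filled in. In an intersecting family any two successful sets share an index and
therefore output the same value, so the first success in the enumeration yields that value too. -/

section

variable {M : Type*} [DecidableEq M] {n : ℕ}

theorem checkSet_eq_some_iff {S : Finset (Fin n)} {m : Fin n → Option M} {x : M} :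
    checkSet S m = some x ↔ S.Nonempty ∧ ∀ j ∈ S, m j = some x := by
  unfold checkSet
  rcases hS : S.toList with _ | ⟨a, t⟩
  · simp [← Finset.toList_eq_nil, hS]
  have ha : a ∈ S := by simp [← Finset.mem_toList, hS]
  have hne : S.Nonempty := ⟨a, ha⟩
  rcases hma : m a with _ | y
  · simp only [hma, reduceCtorEq, false_iff, not_and]
    exact fun _ h => by simpa [hma] using h a ha
  · have hall_iff : (∀ j ∈ S, m j = some x) ↔ y = x ∧ ∀ j ∈ S, m j = some y := by
      refine ⟨fun h => ?_, fun ⟨hyx, h⟩ => hyx ▸ h⟩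
      obtain rfl : y = x := by simpa [hma] using h a ha
      exact ⟨rfl, h⟩
    simp only [hma, hall_iff, hne, true_and]
    split_ifs with h <;> simp_all

theorem checkSet_eq_some_of_update_none {S : Finset (Fin n)} {m : Fin n → Option M} {i : Fin n} {x : M}
    (h : checkSet S (Function.update m i none) = some x) : checkSet S m = some x := by
  rw [checkSet_eq_some_iff] at h ⊢
  refine ⟨h.1, fun j hj => ?_⟩
  have hji : j ≠ i := by
    rintro rfl
    simpa using h.2 j hj
  simpa [Function.update_of_ne hji] using h.2 j hj

theorem checkSet_eq_of_inter_nonempty {S S' : Finset (Fin n)} {m : Fin n → Option M} {x y : M}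
    (hSS' : (S ∩ S').Nonempty) (hx : checkSet S m = some x) (hy : checkSet S' m = some y) :
    x = y := by
  obtain ⟨j, hj⟩ := hSS'
  rw [Finset.mem_inter] at hj
  rw [checkSet_eq_some_iff] at hx hy
  simpa [hx.2 j hj.1] using hy.2 j hj.2

theorem IntersectingList.multisigInterp_eq_of_checkSet {L : List (Finset (Fin n))}
    (hL : IntersectingList L) {S : Finset (Fin n)} (hS : S ∈ L) {m : Fin n → Option M} {x : M}
    (hx : checkSet S m = some x) : multisigInterp L m = some x := by
  obtain ⟨y, hy⟩ := Option.isSome_iff_exists.mp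
    (List.findSome?_isSome_iff.mpr ⟨S, hS, by simp [hx]⟩ : (multisigInterp L m).isSome)
  obtain ⟨S', hS', hS'y⟩ := List.exists_of_findSome?_eq_some hy
  rw [checkSet_eq_of_inter_nonempty (hL S hS S' hS') hx hS'y]
  exact hy

end

/-- The multisig interpreter of an intersecting family is a monotone
sig-interpreter: filling in a missing entry never changes the output from one
valid value to another. -/
theorem multisig_interp_monotone
    {M : Type*} [DecidableEq M] {n : ℕ}
    (L : List (Finset (Fin n))) (hL : IntersectingList L)
    (m : Fin n → Option M) (i : Fin n) (x : M)
    (h : multisigInterp L (Function.update m i none) = some x) :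
    multisigInterp L m = some x := by
  obtain ⟨S, hS, hSx⟩ := List.exists_of_findSome?_eq_some h
  exact hL.multisigInterp_eq_of_checkSet hS (checkSet_eq_some_of_update_none hSx)
end

section
/- If F is a family of subsets of [n] containing two disjoint sets S and S', then the multisig interpreter g_F is not 'double-spend safe': there exist input vectors m, m' ∈ (Option M)^n and distinct values a ≠ b (for |M| ≥ 2) such that g_F(m) = some a, g_F(m') = some b, and for every index i, at least one of m_i, m'_i is none or m_i = m'_i. -/
lemma findSome?_eq_of {α β : Type*} (L : List α) (f : α → Option β) (a : β)
    (hex : ∃ T ∈ L, f T = some a)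
    (hall : ∀ T ∈ L, ∀ x, f T = some x → x = a) :
    L.findSome? f = some a := by
  induction L with
  | nil => simp at hex
  | cons T L ih =>
    rw [List.findSome?_cons]
    cases h : f T with
    | some x =>
      have := hall T (by simp) x h
      simp [this]
    | none =>
      apply ih
      · obtain ⟨T', hT', hfT'⟩ := hex
        rcases List.mem_cons.1 hT' with rfl | hT'
        · rw [h] at hfT'; exact absurd hfT' (by simp)
        · exact ⟨T', hT', hfT'⟩
      · exact fun T' hT' => hall T' (List.mem_cons_of_mem _ hT')

lemma checkSet_const {M : Type*} [DecidableEq M] {n : ℕ}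
    (S : Finset (Fin n)) (a : M) :
    ∀ T : Finset (Fin n), ∀ x : M,
      checkSet T (fun i => if i ∈ S then some a else none) = some x → x = a := by
  intro T x h
  unfold checkSet at h
  rcases hl : T.toList with _ | ⟨i, rest⟩ <;> rw [hl] at h
  · simp at h
  · by_cases hi : i ∈ S <;> simp [hi] at h
    exact h.2.symm

lemma checkSet_self {M : Type*} [DecidableEq M] {n : ℕ}
    (S : Finset (Fin n)) (hSne : S.Nonempty) (a : M) :
    checkSet S (fun i => if i ∈ S then some a else none) = some a := by
  unfold checkSet
  rcases hl : S.toList with _ | ⟨i, rest⟩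
  · exact absurd (Finset.toList_eq_nil.1 hl) hSne.ne_empty
  · have hi : i ∈ S := by
      rw [← Finset.mem_toList, hl]; simp
    simp only [hi, if_true]
    rw [if_pos]
    intro j hj; simp [hj]

lemma interp_const {M : Type*} [DecidableEq M] {n : ℕ}
    (L : List (Finset (Fin n))) (S : Finset (Fin n)) (hS : S ∈ L)
    (hSne : S.Nonempty) (a : M) :
    multisigInterp L (fun i => if i ∈ S then some a else none) = some a := by
  apply findSome?_eq_of
  · exact ⟨S, hS, checkSet_self S hSne a⟩
  · exact fun T _ => checkSet_const S a T

/-- If the family contains two disjoint (nonempty) sets, the multisig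
interpreter is not double-spend safe: there are compatible input vectors on
which it outputs two distinct valid values. -/
theorem disjoint_sets_not_double_spend_safe
    {M : Type*} [DecidableEq M] {n : ℕ}
    (L : List (Finset (Fin n))) (S S' : Finset (Fin n))
    (hS : S ∈ L) (hS' : S' ∈ L)
    (hSne : S.Nonempty) (hS'ne : S'.Nonempty)
    (hdisj : S ∩ S' = ∅)
    (a b : M) (hab : a ≠ b) :
    ∃ m m' : Fin n → Option M,
      multisigInterp L m = some a ∧ multisigInterp L m' = some b ∧
      ∀ i : Fin n, m i = none ∨ m' i = none ∨ m i = m' i := by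
  refine ⟨fun i => if i ∈ S then some a else none,
         fun i => if i ∈ S' then some b else none,
         interp_const L S hS hSne a, interp_const L S' hS' hS'ne b, ?_⟩
  intro i
  by_cases hi : i ∈ S
  · have : i ∉ S' := fun h => by
      have : i ∈ S ∩ S' := Finset.mem_inter.2 ⟨hi, h⟩
      simp [hdisj] at this
    simp [this]
  · simp [hi]
end
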